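/- Let A₁ and A₂ be unital associative algebras over ℂ and let A = A₁ ⊕ A₂ be their direct sum (product) algebra. Assume: (1) every Lie derivation on A is standard, i.e., is the sum of a derivation δ : A → A and a linear map τ : A → Z(A) satisfying τ([a,b]) = 0 for all a,b in A; (2) every derivation on A is inner, i.e., of the form a ↦ [a,t] = at - ta for some fixed t in A; (3) every local derivation on A is a derivation; (4) Z(A₁) ∩ [A₁,A₁] = {0}, where [A₁,A₁] denotes the linear span of all commutators in A₁; (5) A₂ = [A₂,A₂], where [A₂,A₂] denotes the linear span of all commutators in A₂. Then every local Lie derivation on A is a Lie derivation (indeed a standard Lie derivation). -/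
import Mathlib


/-- Lemma 3.1: Let `A = A₁ ⊕ A₂` be the direct sum of two unital complex algebras.
If (1) every Lie derivation on `A` is standard, (2) every derivation on `A` is inner,
(3) every local derivation on `A` is a derivation, (4) `Z(A₁) ∩ [A₁,A₁] = {0}`, and
(5) `A₂ = [A₂,A₂]`, then every local Lie derivation on `A` is a Lie derivation
(indeed a standard one). -/
theorem localLieDerivation_isLieDerivation_of_directSum
    {A₁ A₂ : Type*} [Ring A₁] [Algebra ℂ A₁] [Ring A₂] [Algebra ℂ A₂]
    -- (1) every Lie derivation on A = A₁ × A₂ is standard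
    (h1 : ∀ ψ : A₁ × A₂ →ₗ[ℂ] A₁ × A₂,
      (∀ x y, ψ (x * y - y * x) = (ψ x * y - y * ψ x) + (x * ψ y - ψ y * x)) →
      ∃ δ τ : A₁ × A₂ →ₗ[ℂ] A₁ × A₂,
        (∀ x y, δ (x * y) = δ x * y + x * δ y) ∧
        (∀ a, τ a ∈ Subalgebra.center ℂ (A₁ × A₂)) ∧
        (∀ x y, τ (x * y - y * x) = 0) ∧
        ψ = δ + τ)
    -- (2) every derivation on A is inner
    (h2 : ∀ δ : A₁ × A₂ →ₗ[ℂ] A₁ × A₂,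
      (∀ x y, δ (x * y) = δ x * y + x * δ y) →
      ∃ t : A₁ × A₂, ∀ a, δ a = a * t - t * a)
    -- (3) every local derivation on A is a derivation
    (h3 : ∀ δ : A₁ × A₂ →ₗ[ℂ] A₁ × A₂,
      (∀ a, ∃ d : A₁ × A₂ →ₗ[ℂ] A₁ × A₂,
        (∀ x y, d (x * y) = d x * y + x * d y) ∧ δ a = d a) →
      ∀ x y, δ (x * y) = δ x * y + x * δ y)
    -- (4) Z(A₁) ∩ [A₁,A₁] = {0}
    (h4 : ∀ x : A₁, x ∈ Subalgebra.center ℂ A₁ →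
      x ∈ Submodule.span ℂ {y : A₁ | ∃ a b : A₁, y = a * b - b * a} → x = 0)
    -- (5) A₂ = [A₂,A₂]
    (h5 : ∀ x : A₂, x ∈ Submodule.span ℂ {y : A₂ | ∃ a b : A₂, y = a * b - b * a})
    -- φ is a local Lie derivation on A
    (φ : A₁ × A₂ →ₗ[ℂ] A₁ × A₂)
    (hloc : ∀ a : A₁ × A₂, ∃ ψ : A₁ × A₂ →ₗ[ℂ] A₁ × A₂,
      (∀ x y, ψ (x * y - y * x) = (ψ x * y - y * ψ x) + (x * ψ y - ψ y * x)) ∧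
      φ a = ψ a) :
    -- φ is a Lie derivation, indeed a standard one
    (∀ x y, φ (x * y - y * x) = (φ x * y - y * φ x) + (x * φ y - φ y * x)) ∧
    ∃ δ τ : A₁ × A₂ →ₗ[ℂ] A₁ × A₂,
      (∀ x y, δ (x * y) = δ x * y + x * δ y) ∧
      (∀ a, τ a ∈ Subalgebra.center ℂ (A₁ × A₂)) ∧
      (∀ x y, τ (x * y - y * x) = 0) ∧
      φ = δ + τ := by
  classical
  -- decomposition of φ at any point: φ a = [a,t] + τ a with τ center-valued, vanishing on commutators
  have hdec : ∀ a : A₁ × A₂, ∃ (t : A₁ × A₂) (τ : A₁ × A₂ →ₗ[ℂ] A₁ × A₂),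
      (∀ b, τ b ∈ Subalgebra.center ℂ (A₁ × A₂)) ∧ (∀ x y, τ (x * y - y * x) = 0) ∧
      φ a = (a * t - t * a) + τ a := by
    intro a
    obtain ⟨ψ, hψ, hφa⟩ := hloc a
    obtain ⟨δ, τ, hδ, hτc, hτ0, hψeq⟩ := h1 ψ hψ
    obtain ⟨t, ht⟩ := h2 δ hδ
    refine ⟨t, τ, hτc, hτ0, ?_⟩
    rw [hφa, hψeq, LinearMap.add_apply, ht a]
  -- a center element with first component in the commutator span and zero second component is 0
  have lem0 : ∀ z : A₁ × A₂, z ∈ Subalgebra.center ℂ (A₁ × A₂) →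
      z.1 ∈ Submodule.span ℂ {y : A₁ | ∃ a b : A₁, y = a * b - b * a} → z.2 = 0 → z = 0 := by
    intro z hz hz1 hz2
    have hc1 : z.1 ∈ Subalgebra.center ℂ A₁ := by
      rw [Subalgebra.mem_center_iff] at hz ⊢
      intro b
      exact congrArg Prod.fst (hz (b, 0))
    have h1' := h4 z.1 hc1 hz1
    exact Prod.ext h1' hz2
  -- a center-valued map vanishing on commutators vanishes on {0} × A₂
  have hτ2 : ∀ τ : A₁ × A₂ →ₗ[ℂ] A₁ × A₂, (∀ x y, τ (x * y - y * x) = 0) →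
      ∀ a₂ : A₂, τ ((0 : A₁), a₂) = 0 := by
    intro τ hτ0 a₂
    refine Submodule.span_induction (p := fun x _ => τ ((0 : A₁), x) = 0) ?_ ?_ ?_ ?_ (h5 a₂)
    · rintro x ⟨a, b, rfl⟩
      have he : ((0 : A₁), a * b - b * a) =
          ((0 : A₁), a) * ((0 : A₁), b) - ((0 : A₁), b) * ((0 : A₁), a) := by
        simp [Prod.ext_iff]
      rw [he]; exact hτ0 _ _
    · simp only [Prod.mk_zero_zero]; exact map_zero τ
    · intro x y _ _ hx hy
      have he : ((0 : A₁), x + y) = ((0 : A₁), x) + ((0 : A₁), y) := by simp [Prod.ext_iff]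
      rw [he, map_add, hx, hy, add_zero]
    · intro c x _ hx
      have he : ((0 : A₁), c • x) = c • ((0 : A₁), x) := by simp [Prod.ext_iff]
      rw [he, map_smul, hx, smul_zero]
  -- existence of the central part at points (a₁, 0)
  have hex : ∀ a₁ : A₁, ∃ (z t : A₁ × A₂), z ∈ Subalgebra.center ℂ (A₁ × A₂) ∧
      φ ((a₁, 0) : A₁ × A₂) = ((a₁, 0) * t - t * (a₁, 0)) + z := by
    intro a₁
    obtain ⟨t, τ, hτc, hτ0, heq⟩ := hdec (a₁, 0)
    exact ⟨τ (a₁, 0), t, hτc _, heq⟩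
  choose w t hwc hw using hex
  -- uniqueness of the central part
  have uniq : ∀ (a₁ : A₁) (z c : A₁ × A₂), z ∈ Subalgebra.center ℂ (A₁ × A₂) →
      c.1 ∈ Submodule.span ℂ {y : A₁ | ∃ a b : A₁, y = a * b - b * a} → c.2 = 0 →
      φ ((a₁, 0) : A₁ × A₂) = c + z → z = w a₁ := by
    intro a₁ z c hz hc1 hc2 heq
    have hXW : ((a₁, 0) * t a₁ - t a₁ * (a₁, 0)) + w a₁ = c + z := (hw a₁).symm.trans heq
    have hsub : z - w a₁ = ((a₁, 0) * t a₁ - t a₁ * (a₁, 0)) - c := by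
      rw [sub_eq_sub_iff_add_eq_add, add_comm z c, ← hXW, add_comm]
    have h0 : z - w a₁ = 0 := by
      refine lem0 _ (Subalgebra.sub_mem _ hz (hwc a₁)) ?_ ?_
      · rw [hsub]
        refine Submodule.sub_mem _ (Submodule.subset_span ⟨a₁, (t a₁).1, ?_⟩) hc1
        simp [Prod.ext_iff]
      · rw [hsub]
        simp [hc2]
    exact sub_eq_zero.mp h0
  -- additivity and homogeneity of w
  have hadd : ∀ a b : A₁, w (a + b) = w a + w b := by
    intro a b
    refine (uniq (a + b) (w a + w b)
        (((a, 0) * t a - t a * (a, 0)) + ((b, 0) * t b - t b * (b, 0)))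
        (Subalgebra.add_mem _ (hwc a) (hwc b)) ?_ ?_ ?_).symm
    · refine Submodule.add_mem _ (Submodule.subset_span ⟨a, (t a).1, ?_⟩)
        (Submodule.subset_span ⟨b, (t b).1, ?_⟩) <;> simp [Prod.ext_iff]
    · simp
    · have he : (((a + b : A₁), (0 : A₂)) : A₁ × A₂) = (a, 0) + (b, 0) := by
        simp [Prod.ext_iff]
      rw [he, map_add, hw a, hw b]; abel
  have hsmul : ∀ (c : ℂ) (a : A₁), w (c • a) = c • w a := by
    intro c a
    refine (uniq (c • a) (c • w a) (c • ((a, 0) * t a - t a * (a, 0)))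
        (Subalgebra.smul_mem _ (hwc a) c) ?_ ?_ ?_).symm
    · refine Submodule.smul_mem _ c (Submodule.subset_span ⟨a, (t a).1, ?_⟩)
      simp [Prod.ext_iff]
    · simp
    · have he : (((c • a : A₁), (0 : A₂)) : A₁ × A₂) = c • ((a, 0) : A₁ × A₂) := by
        simp [Prod.ext_iff]
      rw [he, map_smul, hw a, smul_add]
  -- w vanishes on commutators of A₁
  have hwcomm : ∀ p q : A₁, w (p * q - q * p) = 0 := by
    intro p q
    obtain ⟨t', τ, hτc, hτ0, heq⟩ := hdec ((p * q - q * p : A₁), (0 : A₂))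
    have hz : τ (((p * q - q * p : A₁), (0 : A₂)) : A₁ × A₂) = 0 := by
      have he : (((p * q - q * p : A₁), (0 : A₂)) : A₁ × A₂) =
          ((p, 0) : A₁ × A₂) * (q, 0) - ((q, 0) : A₁ × A₂) * (p, 0) := by
        simp [Prod.ext_iff]
      rw [he]; exact hτ0 _ _
    refine (uniq (p * q - q * p) 0
        (((p * q - q * p : A₁), (0 : A₂)) * t' - t' * ((p * q - q * p : A₁), (0 : A₂)))
        (zero_mem _) ?_ ?_ ?_).symm
    · exact Submodule.subset_span ⟨p * q - q * p, t'.1, by simp [Prod.ext_iff]⟩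
    · simp
    · rw [heq, hz]
  -- the center-valued linear map τ'
  let τ' : A₁ × A₂ →ₗ[ℂ] A₁ × A₂ :=
    { toFun := fun x => w x.1
      map_add' := fun x y => hadd x.1 y.1
      map_smul' := fun c x => hsmul c x.1 }
  have hτ'app : ∀ x : A₁ × A₂, τ' x = w x.1 := fun _ => rfl
  have hτ'c : ∀ a, τ' a ∈ Subalgebra.center ℂ (A₁ × A₂) := fun a => hwc a.1
  have hτ'comm : ∀ x y : A₁ × A₂, τ' (x * y - y * x) = 0 := fun x y => hwcomm x.1 y.1
  -- inner derivations are derivations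
  have hinner : ∀ s : A₁ × A₂, ∃ d : A₁ × A₂ →ₗ[ℂ] A₁ × A₂,
      (∀ x y, d (x * y) = d x * y + x * d y) ∧ ∀ x, d x = x * s - s * x := by
    intro s
    refine ⟨LinearMap.mulRight ℂ s - LinearMap.mulLeft ℂ s, ?_, ?_⟩
    · intro x y
      simp only [LinearMap.sub_apply, LinearMap.mulRight_apply, LinearMap.mulLeft_apply]
      noncomm_ring
    · intro x
      simp [LinearMap.sub_apply, LinearMap.mulRight_apply, LinearMap.mulLeft_apply]
  -- φ - τ' is a local derivation
  have hΦloc : ∀ a : A₁ × A₂, ∃ d : A₁ × A₂ →ₗ[ℂ] A₁ × A₂,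
      (∀ x y, d (x * y) = d x * y + x * d y) ∧ (φ - τ') a = d a := by
    rintro ⟨a₁, a₂⟩
    obtain ⟨t₂, τ, hτc, hτ0, heq⟩ := hdec (0, a₂)
    have h02 : φ (((0 : A₁), a₂) : A₁ × A₂) =
        ((0 : A₁), a₂) * t₂ - t₂ * ((0 : A₁), a₂) := by
      rw [heq, hτ2 τ hτ0 a₂, add_zero]
    obtain ⟨d, hd, hdapp⟩ := hinner ((t a₁).1, t₂.2)
    refine ⟨d, hd, ?_⟩
    have hsplit : ((a₁, a₂) : A₁ × A₂) = (a₁, 0) + (0, a₂) := by simp [Prod.ext_iff]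
    have hφa : φ ((a₁, a₂) : A₁ × A₂) = ((a₁, 0) * t a₁ - t a₁ * (a₁, 0)) + w a₁ +
        (((0 : A₁), a₂) * t₂ - t₂ * ((0 : A₁), a₂)) := by
      rw [hsplit, map_add, hw a₁, h02]
    have hτ'aa : τ' ((a₁, a₂) : A₁ × A₂) = w a₁ := rfl
    have hkey : ((a₁, (0 : A₂)) : A₁ × A₂) * t a₁ - t a₁ * (a₁, 0) +
        (((0 : A₁), a₂) * t₂ - t₂ * ((0 : A₁), a₂)) =
        ((a₁, a₂) : A₁ × A₂) * ((t a₁).1, t₂.2) - ((t a₁).1, t₂.2) * (a₁, a₂) := by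
      simp [Prod.ext_iff]
    rw [LinearMap.sub_apply, hφa, hτ'aa, hdapp, ← hkey]; abel
  have hΦder := h3 (φ - τ') hΦloc
  have hφeq : ∀ a, φ a = (φ - τ') a + τ' a := by
    intro a; rw [LinearMap.sub_apply]; abel
  have hlie : ∀ x y : A₁ × A₂, φ (x * y - y * x) =
      (φ x * y - y * φ x) + (x * φ y - φ y * x) := by
    intro x y
    have e1 : φ (x * y - y * x) = (φ - τ') (x * y) - (φ - τ') (y * x) := by
      rw [hφeq (x * y - y * x), hτ'comm x y, add_zero, map_sub]
    have hcx : ∀ b, b * τ' x = τ' x * b := Subalgebra.mem_center_iff.mp (hτ'c x)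
    have hcy : ∀ b, b * τ' y = τ' y * b := Subalgebra.mem_center_iff.mp (hτ'c y)
    rw [e1, hΦder x y, hΦder y x, hφeq x, hφeq y]
    simp only [add_mul, mul_add]
    rw [hcx y, hcy x]
    abel
  exact ⟨hlie, (φ - τ'), τ', hΦder, hτ'c, hτ'comm, LinearMap.ext hφeq⟩
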